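/- If K is a minimal set of a memoryless RDS admitting stable trajectories, then every point of K is almost surely stable. If in addition K is the only minimal set, then every point of X is almost surely stable and for each x ∈ X, almost surely d(φ(t,ω)x, K) → 0 as t → ∞. -/

import Mathlib

open MeasureTheory ProbabilityTheory Filter Topology

/-- A (discrete-time) filtered random dynamical system over a memoryless stationary
noise space, on a metric space `X`. -/
structure MRDS (Ω X : Type*) [mΩ : MeasurableSpace Ω] [MetricSpace X]
    [mX : MeasurableSpace X] [BorelSpace X] where
  P : Measure Ω
  hprob : IsProbabilityMeasure P
  F : ℕ → MeasurableSpace Ω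
  hle : ∀ t, F t ≤ mΩ
  hmono : Monotone F
  θ : ℕ → Ω → Ω
  hθ0 : θ 0 = id
  hθadd : ∀ s t, θ (s + t) = θ s ∘ θ t
  hθmeas : ∀ s t, @Measurable Ω Ω (F (s + t)) (F s) (θ t)
  hθpres : ∀ t, MeasurePreserving (θ t) P P
  memless : ∀ s, Indep (F s) ((⨆ t, F t).comap (θ s)) P
  φ : ℕ → Ω → X → X
  hφcont : ∀ t ω, Continuous (φ t ω)
  hφmeas : ∀ t, @Measurable (Ω × X) X ((F t).prod mX) mX (fun p => φ t p.1 p.2)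
  hφ0 : ∀ ω, φ 0 ω = id
  hφcocycle : ∀ s t ω, φ (s + t) ω = φ t (θ s ω) ∘ φ s ω

namespace MRDS

variable {Ω X : Type*} [MeasurableSpace Ω] [MetricSpace X]
  [MeasurableSpace X] [BorelSpace X]

/-- The one-point transition probabilities `φ_x^t`. -/
noncomputable def law (R : MRDS Ω X) (x : X) (t : ℕ) : Measure X :=
  R.P.map (fun ω => R.φ t ω x)

/-- A closed set that is forward-invariant for the one-point transition probabilities. -/
def FwdInv (R : MRDS Ω X) (K : Set X) : Prop :=
  IsClosed K ∧ ∀ x ∈ K, ∀ t, R.law x t K = 1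

/-- A minimal set: non-empty, closed, forward-invariant, with no proper non-empty closed
forward-invariant subsets. -/
def Minimal (R : MRDS Ω X) (K : Set X) : Prop :=
  K.Nonempty ∧ R.FwdInv K ∧ ∀ K' ⊆ K, R.FwdInv K' → K' = K ∨ K' = ∅

/-- `A` contracts under the noise realisation `ω`. -/
def contracts (R : MRDS Ω X) (ω : Ω) (A : Set X) : Prop :=
  Tendsto (fun t => EMetric.diam (R.φ t ω '' A)) atTop (𝓝 0)

/-- `(ω, x)` is an asymptotically stable pair. -/
def stablePair (R : MRDS Ω X) (ω : Ω) (x : X) : Prop :=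
  ∃ U ∈ 𝓝 x, R.contracts ω U

/-- The set of asymptotically stable pairs. -/
def O (R : MRDS Ω X) : Set (Ω × X) := {p | R.stablePair p.1 p.2}

/-- The set of noise realisations under which `U` contracts. -/
def EU (R : MRDS Ω X) (U : Set X) : Set Ω := {ω | R.contracts ω U}

/-- `x` is potentially stable. -/
def potStable (R : MRDS Ω X) (x : X) : Prop := 0 < R.P {ω | R.stablePair ω x}

/-- `x` is almost surely stable. -/
def asStable (R : MRDS Ω X) (x : X) : Prop := R.P {ω | R.stablePair ω x} = 1

/-- `φ` is globally synchronising. -/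
def synchronising (R : MRDS Ω X) : Prop :=
  ∀ x y : X,
    R.P {ω | Tendsto (fun t => dist (R.φ t ω x) (R.φ t ω y)) atTop (𝓝 0)} = 1

/-- `φ` is stably synchronising. -/
def stablySynchronising (R : MRDS Ω X) : Prop :=
  R.synchronising ∧ ∀ x : X, R.asStable x

/-- `ρ` is a stationary measure for the one-point transition probabilities. -/
def stationary (R : MRDS Ω X) (ρ : Measure X) : Prop :=
  ∀ t, ∀ A : Set X, MeasurableSet A → ∫⁻ x, R.law x t A ∂ρ = ρ A

end MRDS

/-!
Some basic open set `V` meeting `K` contracts with positive probability: stable trajectories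
through `K` have positive probability, and every stable pair is witnessed by one of countably
many basic sets. By minimality every point of `K` reaches `V` with positive probability, and by
compactness and lower semicontinuity uniformly so. The memoryless property then bounds the
conditional probability of stability given `F t` from below along the whole trajectory, and
Lévy's zero–one law upgrades this to probability one. If `K` is the only minimal set, every
point of `X` reaches `V`, so the same argument runs on `X`; as `V` contains a point of `K`
whose trajectory stays in `K`, a trajectory that enters `V` while `V` contracts converges to `K`.
-/
open TopologicalSpace
open scoped ENNReal

theorem lowerSemicontinuous_lintegral {α Ω : Type*} [TopologicalSpace α]
    [FirstCountableTopology α] [MeasurableSpace Ω] {μ : Measure Ω} {f : α → Ω → ℝ≥0∞}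
    (hf : ∀ ω, LowerSemicontinuous fun y => f y ω) (hm : ∀ y, Measurable (f y)) :
    LowerSemicontinuous fun y => ∫⁻ ω, f y ω ∂μ :=
  lowerSemicontinuous_iff_le_liminf.2 fun y =>
    (lintegral_mono fun ω => (hf ω).le_liminf y).trans (lintegral_liminf_le hm)

theorem measurable_ediam_image {Ω X Y : Type*} {mΩ : MeasurableSpace Ω} [TopologicalSpace Y]
    [PseudoMetrizableSpace Y] [SeparableSpace Y] [PseudoEMetricSpace X]
    [SecondCountableTopology X] [MeasurableSpace X] [OpensMeasurableSpace X] {f : Ω → Y → X}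
    (hc : ∀ ω, Continuous (f ω)) (hm : ∀ y, Measurable fun ω => f ω y) (U : Set Y) :
    Measurable fun ω => Metric.ediam (f ω '' U) := by
  obtain ⟨c, hcU, hc_count, hUc⟩ :=
    (IsSeparable.of_separableSpace U).exists_countable_dense_subset
  -- `f ω '' c` is dense in `f ω '' U`, so the diameter is a countable supremum
  have hdense : ∀ ω, Metric.ediam (f ω '' U) = Metric.ediam (f ω '' c) := fun ω => by
    refine le_antisymm ?_ (Metric.ediam_mono (Set.image_mono hcU))
    rw [← Metric.ediam_closure (f ω '' c)]
    exact Metric.ediam_mono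
      ((Set.image_mono hUc).trans (image_closure_subset_closure_image (hc ω)))
  simp_rw [hdense]
  simp only [Metric.ediam, iSup_image]
  exact .biSup _ hc_count fun p _ => .biSup _ hc_count fun q _ => (hm p).edist (hm q)

theorem measure_preimage_prodMk_eq_lintegral {Ω α β : Type*} [MeasurableSpace Ω]
    {mα : MeasurableSpace α} [MeasurableSpace β] {μ ν : Measure Ω} [IsFiniteMeasure μ]
    [IsFiniteMeasure ν] {g : Ω → α} {f : Ω → β} (hg : Measurable g) (hf : Measurable f)
    (hfactor : ∀ s t, MeasurableSet s → MeasurableSet t →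
      μ (g ⁻¹' s ∩ f ⁻¹' t) = ν (g ⁻¹' s) * μ (f ⁻¹' t))
    {W : Set (α × β)} (hW : MeasurableSet W) :
    μ ((fun ω => (g ω, f ω)) ⁻¹' W) = ∫⁻ ω, ν (g ⁻¹' {a | (a, f ω) ∈ W}) ∂μ := by
  have hprod : (ν.map g).prod (μ.map f) = μ.map fun ω => (g ω, f ω) :=
    Measure.prod_eq fun s t hs ht => by
      rw [Measure.map_apply (hg.prodMk hf) (hs.prod ht), Set.mk_preimage_prod,
        Measure.map_apply hg hs, Measure.map_apply hf ht, hfactor s t hs ht]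
  rw [← Measure.map_apply (hg.prodMk hf) hW, ← hprod, Measure.prod_apply_symm hW,
    lintegral_map (measurable_measure_prodMk_right hW) hf]
  simp_rw [Measure.map_apply hg (measurable_prodMk_right hW)]
  rfl

theorem measure_eq_one_of_le_condExp_indicator {Ω : Type*} {m0 : MeasurableSpace Ω}
    {μ : Measure Ω} [IsProbabilityMeasure μ] {ℱ : Filtration ℕ m0} {S : Set Ω}
    (hS : MeasurableSet[⨆ n, ℱ n] S) {δ : ℝ} (hδ : 0 < δ)
    (hle : ∀ n, ∀ᵐ ω ∂μ, δ ≤ μ[S.indicator 1 | ℱ n] ω) : μ S = 1 := by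
  have hSm : MeasurableSet S := iSup_le ℱ.le _ hS
  have hlim := ((integrable_const (1 : ℝ) (μ := μ)).indicator hSm).tendsto_ae_condExp
    (stronglyMeasurable_const.indicator hS)
  refine (prob_compl_eq_zero_iff hSm).1 (ae_iff.1 ?_)
  filter_upwards [hlim, ae_all_iff.2 hle] with ω hω hδω
  by_contra hωS
  have : δ ≤ S.indicator 1 ω := ge_of_tendsto' hω hδω
  rw [Set.indicator_of_notMem hωS] at this
  exact this.not_gt hδ

namespace MRDS

variable {Ω X : Type*} [mΩ : MeasurableSpace Ω] [MetricSpace X] [mX : MeasurableSpace X]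
  [BorelSpace X] (R : MRDS Ω X)

instance isProbabilityMeasure_P : IsProbabilityMeasure R.P := R.hprob

def filtration : Filtration ℕ mΩ := ⟨R.F, R.hmono, R.hle⟩

abbrev Fsup : MeasurableSpace Ω := ⨆ t, R.F t

lemma Fsup_le : R.Fsup ≤ mΩ := iSup_le R.hle

lemma F_le_Fsup (t : ℕ) : R.F t ≤ R.Fsup := le_iSup R.F t

lemma measurable_phi_F (t : ℕ) (x : X) : Measurable[R.F t] fun ω => R.φ t ω x :=
  (R.hφmeas t).comp (measurable_id.prodMk measurable_const)

lemma measurable_phi (t : ℕ) (x : X) : Measurable fun ω => R.φ t ω x :=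
  (R.measurable_phi_F t x).mono (R.hle t) le_rfl

lemma measurable_phi_Fsup_prod (t : ℕ) :
    Measurable[R.Fsup.prod mX] fun p : Ω × X => R.φ t p.1 p.2 :=
  (R.hφmeas t).mono (sup_le_sup (MeasurableSpace.comap_mono (R.F_le_Fsup t)) le_rfl) le_rfl

lemma measurable_theta (t : ℕ) : Measurable[mΩ, R.Fsup] (R.θ t) :=
  (R.hθpres t).measurable.mono le_rfl R.Fsup_le

lemma measure_inter_theta_preimage {t : ℕ} {A B : Set Ω} (hA : MeasurableSet[R.F t] A)
    (hB : MeasurableSet[R.Fsup] B) : R.P (A ∩ R.θ t ⁻¹' B) = R.P A * R.P B := by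
  rw [(Indep_iff _ _ _).1 (R.memless t) A _ hA ⟨B, hB, rfl⟩,
    (R.hθpres t).measure_preimage (R.Fsup_le _ hB).nullMeasurableSet]

lemma law_apply (x : X) (t : ℕ) {B : Set X} (hB : MeasurableSet B) :
    R.law x t B = R.P {ω | R.φ t ω x ∈ B} :=
  Measure.map_apply (R.measurable_phi t x) hB

instance isProbabilityMeasure_law (x : X) (t : ℕ) : IsProbabilityMeasure (R.law x t) :=
  Measure.isProbabilityMeasure_map (R.measurable_phi t x).aemeasurable

lemma law_zero_of_mem {B : Set X} (hB : MeasurableSet B) {x : X} (hx : x ∈ B) :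
    R.law x 0 B = 1 := by
  simp [R.law_apply x 0 hB, R.hφ0, hx]

lemma measurableSet_EU [SecondCountableTopology X] (U : Set X) :
    MeasurableSet[R.Fsup] (R.EU U) :=
  measurableSet_tendsto (𝓝 0) fun t =>
    (measurable_ediam_image (mΩ := R.F t) (R.hφcont t) (R.measurable_phi_F t) U).mono
      (R.F_le_Fsup t) le_rfl

variable {R} in
lemma contracts.mono {ω : Ω} {U A : Set X} (h : R.contracts ω U) (hAU : A ⊆ U) :
    R.contracts ω A :=
  tendsto_of_tendsto_of_tendsto_of_le_of_le tendsto_const_nhds h (fun _ => zero_le)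
    fun _ => Metric.ediam_mono (Set.image_mono hAU)

lemma phi_add (s t : ℕ) (ω : Ω) (x : X) : R.φ (t + s) ω x = R.φ s (R.θ t ω) (R.φ t ω x) := by
  rw [R.hφcocycle t s ω, Function.comp_apply]

lemma stablePair_of_shift {t : ℕ} {ω : Ω} {x : X}
    (h : R.stablePair (R.θ t ω) (R.φ t ω x)) : R.stablePair ω x := by
  obtain ⟨U, hU, hc⟩ := h
  refine ⟨R.φ t ω ⁻¹' U, (R.hφcont t ω).continuousAt.preimage_mem_nhds hU, ?_⟩
  rw [contracts, ← tendsto_add_atTop_iff_nat t]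
  refine tendsto_of_tendsto_of_tendsto_of_le_of_le tendsto_const_nhds hc (fun _ => zero_le)
    fun s => Metric.ediam_mono ?_
  rintro _ ⟨y, hy, rfl⟩
  exact ⟨R.φ t ω y, hy, by rw [add_comm, R.phi_add]⟩

lemma stablePair_iff_exists_basis [SecondCountableTopology X] {ω : Ω} {x : X} :
    R.stablePair ω x ↔ ∃ V ∈ countableBasis X, x ∈ V ∧ R.contracts ω V := by
  constructor
  · rintro ⟨U, hU, hc⟩
    obtain ⟨V, hVB, hxV, hVU⟩ := (isBasis_countableBasis X).mem_nhds_iff.1 hU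
    exact ⟨V, hVB, hxV, hc.mono hVU⟩
  · rintro ⟨V, hVB, hxV, hc⟩
    exact ⟨V, (isOpen_of_mem_countableBasis hVB).mem_nhds hxV, hc⟩

lemma measurableSet_O [SecondCountableTopology X] : MeasurableSet[R.Fsup.prod mX] R.O := by
  have hO : R.O = ⋃ V ∈ countableBasis X, R.EU V ×ˢ V := by
    ext ⟨ω, x⟩
    simp only [O, R.stablePair_iff_exists_basis, EU, Set.mem_iUnion, Set.mem_prod, exists_prop]
    grind
  rw [hO]
  exact .biUnion (countable_countableBasis X) fun V hV =>
    (R.measurableSet_EU V).prod (isOpen_of_mem_countableBasis hV).measurableSet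

lemma measurable_measure_section {W : Set (Ω × X)} (hW : MeasurableSet[R.Fsup.prod mX] W) :
    Measurable fun z => R.P {ω | (ω, z) ∈ W} := by
  have htrim : ∀ z, R.P {ω | (ω, z) ∈ W} = R.P.trim R.Fsup_le {ω | (ω, z) ∈ W} := fun z =>
    (trim_measurableSet_eq R.Fsup_le (measurable_prodMk_right (m := R.Fsup) hW)).symm
  simp_rw [htrim]
  exact @measurable_measure_prodMk_right Ω X R.Fsup mX (R.P.trim R.Fsup_le) _ W hW

/-- The Markov property: the noise after time `t` is independent of `F t`. -/
lemma measure_inter_shift_eq_lintegral {t : ℕ} (x : X) {A : Set Ω}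
    (hA : MeasurableSet[R.F t] A) {W : Set (Ω × X)} (hW : MeasurableSet[R.Fsup.prod mX] W) :
    R.P (A ∩ {ω | (R.θ t ω, R.φ t ω x) ∈ W}) =
      ∫⁻ ω in A, R.P {ω' | (ω', R.φ t ω x) ∈ W} ∂ R.P := by
  have hmeas := (R.measurable_theta t).prodMk (R.measurable_phi t x)
  have key := measure_preimage_prodMk_eq_lintegral (mα := R.Fsup) (μ := R.P.restrict A)
    (ν := R.P) (R.measurable_theta t) (R.measurable_phi t x) (fun B S hB hS => by
      have hA' : MeasurableSet[R.F t] ((fun ω => R.φ t ω x) ⁻¹' S ∩ A) :=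
        (R.measurable_phi_F t x hS).inter hA
      rw [Measure.restrict_apply ((R.measurable_theta t hB).inter (R.measurable_phi t x hS)),
        Measure.restrict_apply (R.measurable_phi t x hS),
        (R.hθpres t).measure_preimage (R.Fsup_le _ hB).nullMeasurableSet, mul_comm,
        ← R.measure_inter_theta_preimage hA' hB]
      congr 1
      ext ω
      simp only [Set.mem_inter_iff, Set.mem_preimage]
      tauto) hW
  rw [Measure.restrict_apply (hmeas hW)] at key
  rw [Set.inter_comm]
  refine key.trans (lintegral_congr fun ω => ?_)
  exact (R.hθpres t).measure_preimage
    (R.Fsup_le _ (measurable_prodMk_right (m := R.Fsup) hW)).nullMeasurableSet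

lemma measurable_law (s : ℕ) {B : Set X} (hB : MeasurableSet B) :
    Measurable fun z => R.law z s B := by
  simp_rw [R.law_apply _ s hB]
  exact R.measurable_measure_section (R.measurable_phi_Fsup_prod s hB)

lemma law_add (x : X) (t s : ℕ) {B : Set X} (hB : MeasurableSet B) :
    R.law x (t + s) B = ∫⁻ z, R.law z s B ∂(R.law x t) := by
  have h := R.measure_inter_shift_eq_lintegral (t := t) x MeasurableSet.univ
    (R.measurable_phi_Fsup_prod s hB)
  simp only [Set.univ_inter, Measure.restrict_univ] at h
  rw [law_apply _ _ _ hB, law, lintegral_map (R.measurable_law s hB) (R.measurable_phi t x)]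
  simp_rw [R.law_apply _ s hB, R.phi_add]
  exact h

lemma lowerSemicontinuous_law (t : ℕ) {U : Set X} (hU : IsOpen U) :
    LowerSemicontinuous fun y => R.law y t U := by
  have hind : Measurable (U.indicator fun _ => (1 : ℝ≥0∞)) :=
    measurable_const.indicator hU.measurableSet
  have h : ∀ y, R.law y t U = ∫⁻ ω, U.indicator (fun _ => 1) (R.φ t ω y) ∂ R.P := fun y => by
    rw [← lintegral_map hind (R.measurable_phi t y), ← law,
      lintegral_indicator_const hU.measurableSet, one_mul]
  simp_rw [h]
  exact lowerSemicontinuous_lintegral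
    (fun ω => (hU.lowerSemicontinuous_indicator zero_le_one).comp (R.hφcont t ω))
    (fun y => hind.comp (R.measurable_phi t y))

lemma law_eq_one_iff_ae {L : Set X} (hL : MeasurableSet L) (x : X) (t : ℕ) :
    R.law x t L = 1 ↔ ∀ᵐ z ∂(R.law x t), z ∈ L := by
  rw [ae_mem_iff_measure_eq hL.nullMeasurableSet, measure_univ]

lemma fwdInv_univ : R.FwdInv (Set.univ : Set X) :=
  ⟨isClosed_univ, fun _ _ _ => measure_univ⟩

lemma fwdInv_setOf_law_eq_zero {L U : Set X} (hL : R.FwdInv L) (hU : IsOpen U) :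
    R.FwdInv {y ∈ L | ∀ t, R.law y t U = 0} := by
  have hclosed : IsClosed {y ∈ L | ∀ t, R.law y t U = 0} := by
    simp only [Set.ofPred_and, Set.ofPred_forall, ← nonpos_iff_eq_zero]
    exact hL.1.inter
      (isClosed_iInter fun t => (R.lowerSemicontinuous_law t hU).isClosed_preimage 0)
  refine ⟨hclosed, fun y hy t => (R.law_eq_one_iff_ae hclosed.measurableSet y t).2 ?_⟩
  have hzero : ∀ s, ∀ᵐ z ∂(R.law y t), R.law z s U = 0 := fun s =>
    (lintegral_eq_zero_iff (R.measurable_law s hU.measurableSet)).1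
      (by rw [← R.law_add y t s hU.measurableSet, hy.2])
  filter_upwards [(R.law_eq_one_iff_ae hL.1.measurableSet y t).1 (hL.2 y hy.1 t),
    ae_all_iff.2 hzero] with z hzL hz
  exact ⟨hzL, hz⟩

lemma law_pos_of_mem_minimal {K U : Set X} (hK : R.Minimal K) (hU : IsOpen U)
    (hUK : (U ∩ K).Nonempty) {y : X} (hy : y ∈ K) : ∃ t, 0 < R.law y t U := by
  by_contra! h
  obtain ⟨x, hxU, hxK⟩ := hUK
  rcases hK.2.2 _ (Set.sep_subset K _) (R.fwdInv_setOf_law_eq_zero hK.2.1 hU) with hall | hempty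
  · have := ((hall.symm ▸ hxK : x ∈ {y ∈ K | ∀ t, R.law y t U = 0})).2 0
    simp [R.law_zero_of_mem hU.measurableSet hxU] at this
  · exact (Set.eq_empty_iff_forall_notMem.1 hempty) y ⟨hy, fun t => nonpos_iff_eq_zero.1 (h t)⟩

lemma fwdInv_sInter [SecondCountableTopology X] {c : Set (Set X)} (hc : ∀ C ∈ c, R.FwdInv C) :
    R.FwdInv (⋂₀ c) := by
  refine ⟨isClosed_sInter fun C hC => (hc C hC).1, fun y hy t => ?_⟩
  -- by second countability, `(⋂₀ c)ᶜ` is the union of countably many `Cᶜ`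
  obtain ⟨T, hT, hTc, hTU⟩ := isOpen_sUnion_countable (compl '' c) (by
    rintro _ ⟨C, hC, rfl⟩
    exact (hc C hC).1.isOpen_compl)
  rw [← prob_compl_eq_zero_iff (isClosed_sInter fun C hC => (hc C hC).1).measurableSet,
    Set.compl_sInter, ← hTU]
  refine (measure_sUnion_null_iff hT).2 fun V hV => ?_
  obtain ⟨C, hC, rfl⟩ := hTc hV
  exact (prob_compl_eq_zero_iff (hc C hC).1.measurableSet).2 ((hc C hC).2 y (hy C hC) t)

lemma exists_minimal_subset [SecondCountableTopology X] {L : Set X} (hL : R.FwdInv L)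
    (hLc : IsCompact L) (hne : L.Nonempty) : ∃ M ⊆ L, R.Minimal M := by
  obtain ⟨M, -, hM⟩ := zorn_superset_nonempty {C | C ⊆ L ∧ C.Nonempty ∧ R.FwdInv C}
    (fun c hcS hchain ⟨C₀, hC₀⟩ => by
      have : Nonempty c := ⟨⟨C₀, hC₀⟩⟩
      refine ⟨⋂₀ c, ⟨(Set.sInter_subset_of_mem hC₀).trans (hcS hC₀).1, ?_,
        R.fwdInv_sInter fun C hC => (hcS hC).2.2⟩, fun C hC => Set.sInter_subset_of_mem hC⟩
      exact IsCompact.nonempty_sInter_of_directed_nonempty_isCompact_isClosed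
        (fun a ha b hb => (hchain.total ha hb).elim (fun h => ⟨a, ha, subset_rfl, h⟩)
          fun h => ⟨b, hb, h, subset_rfl⟩)
        (fun C hC => (hcS hC).2.1) (fun C hC => hLc.of_isClosed_subset (hcS hC).2.2.1 (hcS hC).1)
        fun C hC => (hcS hC).2.2.1)
    L ⟨subset_rfl, hne, hL⟩
  refine ⟨M, hM.1.1, hM.1.2.1, hM.1.2.2, fun K hKM hK => ?_⟩
  rcases K.eq_empty_or_nonempty with hempty | hne
  · exact .inr hempty
  · exact .inl (hKM.antisymm (hM.2 ⟨hKM.trans hM.1.1, hne, hK⟩ hKM))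

lemma law_pos_of_unique_minimal [CompactSpace X] {K U : Set X}
    (huniq : ∀ K', R.Minimal K' → K' = K) (hU : IsOpen U) (hUK : (U ∩ K).Nonempty) (y : X) :
    ∃ t, 0 < R.law y t U := by
  by_contra! h
  have hinv := R.fwdInv_setOf_law_eq_zero R.fwdInv_univ hU
  obtain ⟨M, hM, hMmin⟩ := R.exists_minimal_subset hinv hinv.1.isCompact
    ⟨y, trivial, fun t => nonpos_iff_eq_zero.1 (h t)⟩
  obtain ⟨x, hxU, hxK⟩ := hUK
  have := (hM (huniq M hMmin ▸ hxK)).2 0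
  simp [R.law_zero_of_mem hU.measurableSet hxU] at this

lemma exists_uniform_law_pos {L U : Set X} (hL : IsCompact L) (hU : IsOpen U)
    (hacc : ∀ y ∈ L, ∃ t, 0 < R.law y t U) : ∃ δ > 0, ∀ z ∈ L, ∃ t, δ < R.law z t U := by
  rcases L.eq_empty_or_nonempty with rfl | hne
  · exact ⟨1, one_pos, by simp⟩
  have hlsc : LowerSemicontinuous fun y => ⨆ t, R.law y t U :=
    lowerSemicontinuous_iSup fun t => R.lowerSemicontinuous_law t hU
  obtain ⟨y, hyL, hmin⟩ :=
    LowerSemicontinuousOn.exists_isMinOn hne hL (hlsc.lowerSemicontinuousOn L)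
  obtain ⟨t, ht⟩ := hacc y hyL
  obtain ⟨δ, hδ, hδy⟩ := exists_between (ht.trans_le (le_iSup (fun t => R.law y t U) t))
  exact ⟨δ, hδ, fun z hz => lt_iSup_iff.1 (hδy.trans_le (hmin hz))⟩

lemma condExp_indicator_shift_ae_eq (t : ℕ) (x : X) {W : Set (Ω × X)}
    (hW : MeasurableSet[R.Fsup.prod mX] W) :
    R.P[{ω | (R.θ t ω, R.φ t ω x) ∈ W}.indicator 1 | R.F t] =ᵐ[R.P]
      fun ω => (R.P {ω' | (ω', R.φ t ω x) ∈ W}).toReal := by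
  have hT : MeasurableSet {ω | (R.θ t ω, R.φ t ω x) ∈ W} :=
    (R.measurable_theta t).prodMk (R.measurable_phi t x) hW
  have hg : Measurable[R.F t] fun ω => R.P {ω' | (ω', R.φ t ω x) ∈ W} :=
    (R.measurable_measure_section hW).comp (R.measurable_phi_F t x)
  have hg_int : ∫⁻ ω, R.P {ω' | (ω', R.φ t ω x) ∈ W} ∂ R.P ≠ ∞ :=
    ne_top_of_le_ne_top (by simp) (lintegral_mono fun _ => prob_le_one (μ := R.P))
  refine (ae_eq_condExp_of_forall_setIntegral_eq (R.hle t)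
    ((integrable_const (1 : ℝ) (μ := R.P)).indicator hT)
    (fun s _ _ => (integrable_toReal_of_lintegral_ne_top
      (hg.mono (R.hle t) le_rfl).aemeasurable hg_int).integrableOn)
    (fun s hs _ => ?_) hg.ennreal_toReal.aestronglyMeasurable).symm
  rw [integral_indicator_const _ hT, smul_eq_mul, mul_one, measureReal_restrict_apply hT,
    measureReal_def,
    integral_toReal (hg.mono (R.hle t) le_rfl).aemeasurable
      (ae_of_all _ fun _ => measure_lt_top _ _),
    ← R.measure_inter_shift_eq_lintegral x hs hW, Set.inter_comm]

/-- By Lévy's upward theorem `P(S | F t) → 1_S` for `S = {ω | (ω, x) ∈ W}`, while the Markov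
property bounds `P(S | F t)` below by `δ` whenever `φ t ω x ∈ L`. -/
lemma measure_section_eq_one {W : Set (Ω × X)} (hW : MeasurableSet[R.Fsup.prod mX] W) {x : X}
    (hshift : ∀ t ω, (R.θ t ω, R.φ t ω x) ∈ W → (ω, x) ∈ W) {L : Set X} (hL : MeasurableSet L)
    (hxL : ∀ t, R.law x t L = 1) {δ : ℝ≥0∞} (hδ : 0 < δ)
    (hδL : ∀ z ∈ L, δ ≤ R.P {ω | (ω, z) ∈ W}) :
    R.P {ω | (ω, x) ∈ W} = 1 := by
  obtain ⟨z, hz⟩ : L.Nonempty := nonempty_of_measure_ne_zero (μ := R.law x 0) (by simp [hxL 0])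
  have hδtop : δ ≠ ∞ := ne_top_of_le_ne_top (measure_ne_top _ _) (hδL z hz)
  have hS : MeasurableSet[R.Fsup] {ω | (ω, x) ∈ W} := measurable_prodMk_right (m := R.Fsup) hW
  refine measure_eq_one_of_le_condExp_indicator (ℱ := R.filtration) hS
    (ENNReal.toReal_pos hδ.ne' hδtop) fun t => ?_
  have hT : MeasurableSet {ω | (R.θ t ω, R.φ t ω x) ∈ W} :=
    (R.measurable_theta t).prodMk (R.measurable_phi t x) hW
  have hmono := condExp_mono (m := R.F t) ((integrable_const (1 : ℝ) (μ := R.P)).indicator hT)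
    ((integrable_const (1 : ℝ)).indicator (R.Fsup_le _ hS))
    (ae_of_all _ (Set.indicator_le_indicator_of_subset (hshift t) fun _ => zero_le_one))
  filter_upwards [R.condExp_indicator_shift_ae_eq t x hW, hmono,
    ae_of_ae_map (R.measurable_phi t x).aemeasurable
      ((R.law_eq_one_iff_ae hL x t).1 (hxL t))] with ω hcond hle hmem
  exact (ENNReal.toReal_mono (measure_ne_top _ _) (hδL _ hmem)).trans (hcond ▸ hle)

lemma law_mul_le {U : Set X} (hU : MeasurableSet U) {B : Set Ω} (hB : MeasurableSet[R.Fsup] B)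
    {t : ℕ} {z : X} {S : Set Ω} (hS : ∀ ω, R.φ t ω z ∈ U → R.θ t ω ∈ B → ω ∈ S) :
    R.law z t U * R.P B ≤ R.P S := by
  rw [R.law_apply z t hU]
  exact (R.measure_inter_theta_preimage (R.measurable_phi_F t z hU) hB).symm.trans_le
    (measure_mono fun ω hω => hS ω hω.1 hω.2)

lemma measure_section_eq_one_of_access {W : Set (Ω × X)} (hW : MeasurableSet[R.Fsup.prod mX] W)
    (hshift : ∀ x t ω, (R.θ t ω, R.φ t ω x) ∈ W → (ω, x) ∈ W) {L U : Set X} (hL : R.FwdInv L)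
    (hLc : IsCompact L) (hU : IsOpen U) (hacc : ∀ y ∈ L, ∃ t, 0 < R.law y t U) {B : Set Ω}
    (hB : MeasurableSet[R.Fsup] B) (hBpos : 0 < R.P B)
    (hUB : ∀ t z ω, R.φ t ω z ∈ U → R.θ t ω ∈ B → (ω, z) ∈ W) {x : X} (hx : x ∈ L) :
    R.P {ω | (ω, x) ∈ W} = 1 := by
  obtain ⟨δ, hδ, hδL⟩ := R.exists_uniform_law_pos hLc hU hacc
  refine R.measure_section_eq_one hW (hshift x) hL.1.measurableSet (hL.2 x hx)
    (ENNReal.mul_pos hδ.ne' hBpos.ne') fun z hz => ?_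
  obtain ⟨t, ht⟩ := hδL z hz
  exact (mul_le_mul_left ht.le _).trans (R.law_mul_le hU.measurableSet hB (hUB t z))

lemma asStable_of_access [SecondCountableTopology X] {L U : Set X} (hL : R.FwdInv L)
    (hLc : IsCompact L) (hU : IsOpen U) (hEU : 0 < R.P (R.EU U))
    (hacc : ∀ y ∈ L, ∃ t, 0 < R.law y t U) {x : X} (hx : x ∈ L) : R.asStable x :=
  R.measure_section_eq_one_of_access R.measurableSet_O (fun _ _ _ => R.stablePair_of_shift) hL hLc
    hU hacc (R.measurableSet_EU U) hEU
    (fun _ _ _ hz hc => R.stablePair_of_shift ⟨U, hU.mem_nhds hz, hc⟩) hx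

lemma measurableSet_tendsto_infDist (K : Set X) :
    MeasurableSet[R.Fsup.prod mX]
      {p : Ω × X | Tendsto (fun s => Metric.infDist (R.φ s p.1 p.2) K) atTop (𝓝 0)} :=
  measurableSet_tendsto (𝓝 0) fun s =>
    (Metric.continuous_infDist_pt K).measurable.comp (R.measurable_phi_Fsup_prod s)

lemma tendsto_infDist_of_shift {K : Set X} {t : ℕ} {ω : Ω} {x : X}
    (h : Tendsto (fun s => Metric.infDist (R.φ s (R.θ t ω) (R.φ t ω x)) K) atTop (𝓝 0)) :
    Tendsto (fun s => Metric.infDist (R.φ s ω x) K) atTop (𝓝 0) := by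
  rw [← tendsto_add_atTop_iff_nat t]
  simpa only [add_comm _ t, R.phi_add] using h

lemma tendsto_infDist_of_contracts {K U : Set X} {ω : Ω} (hc : R.contracts ω U) {x₀ : X}
    (hx₀ : x₀ ∈ U) (hK : ∀ s, R.φ s ω x₀ ∈ K) {y : X} (hy : y ∈ U) :
    Tendsto (fun s => Metric.infDist (R.φ s ω y) K) atTop (𝓝 0) := by
  have h : Tendsto (fun s => Metric.infEDist (R.φ s ω y) K) atTop (𝓝 0) :=
    tendsto_of_tendsto_of_tendsto_of_le_of_le tendsto_const_nhds hc (fun _ => zero_le) fun s =>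
      (Metric.infEDist_le_edist_of_mem (hK s)).trans
        (Metric.edist_le_ediam_of_mem (Set.mem_image_of_mem _ hy) (Set.mem_image_of_mem _ hx₀))
  exact (ENNReal.tendsto_toReal ENNReal.zero_ne_top).comp h

lemma ae_tendsto_infDist_of_access [CompactSpace X] {K U : Set X}
    (hK : R.FwdInv K) (hU : IsOpen U) (hUK : (U ∩ K).Nonempty) (hEU : 0 < R.P (R.EU U))
    (hacc : ∀ y, ∃ t, 0 < R.law y t U) (x : X) :
    ∀ᵐ ω ∂ R.P, Tendsto (fun t => Metric.infDist (R.φ t ω x) K) atTop (𝓝 0) := by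
  obtain ⟨x₀, hx₀U, hx₀K⟩ := hUK
  set I := ⋂ s, (fun ω => R.φ s ω x₀) ⁻¹' K
  have hI : ∀ᵐ ω ∂ R.P, ω ∈ I := by
    simp only [I, Set.mem_iInter, Set.mem_preimage]
    exact ae_all_iff.2 fun s => ae_of_ae_map (R.measurable_phi s x₀).aemeasurable
      ((R.law_eq_one_iff_ae hK.1.measurableSet x₀ s).1 (hK.2 x₀ hx₀K s))
  have hB : MeasurableSet[R.Fsup] (R.EU U ∩ I) := (R.measurableSet_EU U).inter
    (.iInter fun s => R.F_le_Fsup s _ (R.measurable_phi_F s x₀ hK.1.measurableSet))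
  have hBpos : 0 < R.P (R.EU U ∩ I) := by
    rwa [measure_inter_conull (ae_iff.1 hI)]
  have hW := R.measurableSet_tendsto_infDist K
  have hS : MeasurableSet {ω | (ω, x) ∈ _} :=
    R.Fsup_le _ (measurable_prodMk_right (m := R.Fsup) hW)
  refine (ae_mem_iff_measure_eq hS.nullMeasurableSet).2 ?_
  rw [measure_univ]
  exact R.measure_section_eq_one_of_access hW (fun _ _ _ => R.tendsto_infDist_of_shift)
    R.fwdInv_univ isCompact_univ hU (fun y _ => hacc y) hB hBpos
    (fun t z ω hz hω => R.tendsto_infDist_of_shift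
      (R.tendsto_infDist_of_contracts hω.1 hx₀U (Set.mem_iInter.1 hω.2) hz)) trivial

lemma exists_isOpen_measure_EU_pos [SecondCountableTopology X] {K : Set X}
    (h : 0 < R.P {ω | ∃ x ∈ K, R.stablePair ω x}) :
    ∃ V, IsOpen V ∧ (V ∩ K).Nonempty ∧ 0 < R.P (R.EU V) := by
  by_contra! h0
  set J := {V ∈ countableBasis X | (V ∩ K).Nonempty}
  have hsub : {ω | ∃ x ∈ K, R.stablePair ω x} ⊆ ⋃ V ∈ J, R.EU V := by
    rintro ω ⟨x, hxK, hx⟩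
    obtain ⟨V, hVB, hxV, hc⟩ := R.stablePair_iff_exists_basis.1 hx
    exact Set.mem_biUnion ⟨hVB, x, hxV, hxK⟩ hc
  refine h.ne' (measure_mono_null hsub ((measure_biUnion_null_iff
    ((countable_countableBasis X).mono (Set.sep_subset _ _))).2 fun V hV => ?_))
  exact nonpos_iff_eq_zero.1 (h0 V (isOpen_of_mem_countableBasis hV.1) hV.2)

end MRDS

/-- If `K` is a minimal set admitting stable trajectories, every point of `K` is almost
surely stable; if moreover `K` is the only minimal set, every point of `X` is almost
surely stable and every trajectory almost surely converges to `K`. -/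
theorem stmt11 {Ω X : Type*} [MeasurableSpace Ω] [MetricSpace X] [CompactSpace X]
    [MeasurableSpace X] [BorelSpace X] (R : MRDS Ω X)
    (K : Set X) (hmin : R.Minimal K)
    (hstab : 0 < R.P {ω | ∃ x ∈ K, R.stablePair ω x}) :
    (∀ x ∈ K, R.asStable x) ∧
    ((∀ K' : Set X, R.Minimal K' → K' = K) →
      (∀ x : X, R.asStable x) ∧
      ∀ x : X, ∀ᵐ ω ∂ R.P,
        Tendsto (fun t => Metric.infDist (R.φ t ω x) K) atTop (𝓝 0)) := by
  obtain ⟨V, hV, hVK, hEV⟩ := R.exists_isOpen_measure_EU_pos hstab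
  have hK := hmin.2.1
  refine ⟨fun x hx => R.asStable_of_access hK hK.1.isCompact hV hEV
    (fun y hy => R.law_pos_of_mem_minimal hmin hV hVK hy) hx, fun huniq => ?_⟩
  have hacc := R.law_pos_of_unique_minimal huniq hV hVK
  exact ⟨fun x => R.asStable_of_access R.fwdInv_univ isCompact_univ hV hEV (fun y _ => hacc y)
    trivial, R.ae_tendsto_infDist_of_access hK hV hVK hEV hacc⟩
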